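/- There is no interval Markov chain equivalent (under either IMC semantics) to the 2-state parametric Markov chain P with states s1 (labeled α, initial) and s0 (labeled β), one parameter x, and transitions p(s1)(s1) = 1−x, p(s1)(s0) = x, p(s0)(s0) = 1−x, p(s0)(s1) = x. In particular, the Markov chain instance with x = 3/4 satisfies P, but the Markov chain M₂ with p(s1)(s1)=1/4, p(s1)(s0)=3/4, p(s0)(s1)=1/3, p(s0)(s0)=2/3 does not satisfy P while it satisfies any IMC whose intervals contain all instances of P; hence no IMC has exactly (up to bisimilarity) the implementations of P. -/

import Mathlib

open Classical
noncomputable section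

structure MC (S : Type) (A : Type) where
  s0 : S
  p : S → S → ℝ
  nonneg : ∀ s s', 0 ≤ p s s'
  sum_one : ∀ s, ∑ᶠ s', p s s' = 1
  V : S → Set A

namespace MC

variable {S A : Type}

/-- Probability of a finite path (product of transition probabilities). -/
def pathProb (p : S → S → ℝ) : S → List S → ℝ
  | _, [] => 1
  | s, s' :: l => p s s' * pathProb p s' l

/-- `UntilPath φ ψ s l` : starting from `s`, the (nonempty) suffix `l` first reaches a
`ψ`-state at its last position, with `φ` holding at all strictly earlier positions after
the start. -/
inductive UntilPath (φ ψ : S → Prop) : S → List S → Prop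
  | single {s s' : S} (h : ψ s') : UntilPath φ ψ s [s']
  | cons {s s' : S} {l : List S} (hψ : ¬ ψ s') (hφ : φ s') (h : UntilPath φ ψ s' l) :
      UntilPath φ ψ s (s' :: l)

/-- `P_s(φ U ψ)` : first-passage sum over until-paths. -/
noncomputable def untilProb (p : S → S → ℝ) (φ ψ : S → Prop) (s : S) : ℝ :=
  ∑' l : {l : List S // UntilPath φ ψ s l}, pathProb p s l.1

/-- `P_s(◊ψ)` : probability of eventually reaching a `ψ`-state from `s`. -/
noncomputable def reachProb (p : S → S → ℝ) (ψ : S → Prop) (s : S) : ℝ :=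
  if ψ s then 1 else untilProb p (fun _ => True) ψ s

/-- `P^M(◊α)` : probability of eventually reaching a state labeled `α` from the initial
state of `M`. -/
noncomputable def Preach (M : MC S A) (α : Set A) : ℝ :=
  reachProb M.p (fun s => M.V s = α) M.s0

/-- Reachability via positive-probability transitions. -/
def Reaches (p : S → S → ℝ) : S → S → Prop :=
  Relation.ReflTransGen fun a b => 0 < p a b

end MC

/-- Interval Markov chain: each transition carries an interval `[Plo, Phi] ⊆ [0,1]`. -/
structure IMC (S : Type) (A : Type) where
  s0 : S
  Plo : S → S → ℝ
  Phi : S → S → ℝ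
  V : S → Set A

/-- Once-and-for-all satisfaction `M ⊨ᵒ I`. -/
def SatO {S A : Type} (M : MC S A) (I : IMC S A) : Prop :=
  M.s0 = I.s0 ∧ M.V = I.V ∧
    ∀ s, MC.Reaches M.p M.s0 s → ∀ s', M.p s s' ∈ Set.Icc (I.Plo s s') (I.Phi s s')

/-- `R` is an at-every-step satisfaction relation between `M` and `I`. -/
def IsSatRel {T S A : Type} (M : MC T A) (I : IMC S A) (R : T → S → Prop) : Prop :=
  R M.s0 I.s0 ∧
    ∀ t s, R t s → M.V t = I.V s ∧
      ∃ δ : T → S → ℝ,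
        (∀ t' s', 0 ≤ δ t' s') ∧
        (∀ t', 0 < M.p t t' → ∑ᶠ s', δ t' s' = 1) ∧
        (∀ s', (∑ᶠ t', M.p t t' * δ t' s') ∈ Set.Icc (I.Plo s s') (I.Phi s s')) ∧
        (∀ t' s', 0 < δ t' s' → R t' s')

/-- At-every-step satisfaction `M ⊨ᵃ I`. -/
def SatA {T S A : Type} (M : MC T A) (I : IMC S A) : Prop :=
  ∃ R, IsSatRel M I R

/-- `M` satisfies `I` with degree `n`. -/
def SatADeg {T S A : Type} (n : ℕ) (M : MC T A) (I : IMC S A) : Prop :=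
  ∃ R, IsSatRel M I R ∧ ∀ t, {s | R t s}.ncard ≤ n

/-- Combined transition function on the disjoint union of two Markov chains. -/
def sumP {S T A : Type} (M : MC S A) (N : MC T A) : S ⊕ T → S ⊕ T → ℝ
  | .inl a, .inl b => M.p a b
  | .inr a, .inr b => N.p a b
  | _, _ => 0

/-- Combined labelling on the disjoint union. -/
def sumV {S T A : Type} (M : MC S A) (N : MC T A) : S ⊕ T → Set A :=
  Sum.elim M.V N.V

/-- Probabilistic bisimilarity of two Markov chains. -/
def Bisimilar {S T A : Type} (M : MC S A) (N : MC T A) : Prop :=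
  ∃ B : (S ⊕ T) → (S ⊕ T) → Prop,
    Equivalence B ∧ B (Sum.inl M.s0) (Sum.inr N.s0) ∧
    ∀ a b, B a b → sumV M N a = sumV M N b ∧
      ∀ C : Set (S ⊕ T), (∀ x y, B x y → (x ∈ C ↔ y ∈ C)) →
        (∑ᶠ c ∈ C, sumP M N a c) = ∑ᶠ c ∈ C, sumP M N b c

/-- Transition function of the pMC `P` under the valuation `x`:
`p(s1)(s1) = 1 - x`, `p(s1)(s0) = x`, `p(s0)(s0) = 1 - x`, `p(s0)(s1) = x`. -/
def pP10 (x : ℝ) : Fin 2 → Fin 2 → ℝ := fun i j => if i = j then 1 - x else x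

/-- Labels: state `1` is labeled `α = univ` (initial), state `0` is labeled `β = ∅`. -/
def VP10 : Fin 2 → Set Unit := fun i => if i = 1 then Set.univ else ∅

/-- `N` is an instance of the pMC `P`. -/
def IsInst10 (N : MC (Fin 2) Unit) : Prop :=
  N.s0 = 1 ∧ N.V = VP10 ∧ ∃ x : ℝ, N.p = pP10 x

/-- Transition function of the Markov chain `M₂`. -/
def pM2 : Fin 2 → Fin 2 → ℝ := fun i j =>
  if i = 1 then (if j = 1 then 1 / 4 else 3 / 4)
  else (if j = 1 then 1 / 3 else 2 / 3)

/-- `I` is equivalent to the pMC `P` under the once-and-for-all IMC semantics. -/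
def EquivO10 {T : Type} (I : IMC T Unit) : Prop :=
  (∀ N : MC (Fin 2) Unit, IsInst10 N → ∃ M' : MC T Unit, SatO M' I ∧ Bisimilar N M') ∧
  (∀ M' : MC T Unit, SatO M' I → ∃ N : MC (Fin 2) Unit, IsInst10 N ∧ Bisimilar M' N)

/-- `I` is equivalent to the pMC `P` under the at-every-step IMC semantics. -/
def EquivA10 {T : Type} (I : IMC T Unit) : Prop :=
  (∀ N : MC (Fin 2) Unit, IsInst10 N → ∃ M' : MC T Unit, SatA M' I ∧ Bisimilar N M') ∧
  (∀ M' : MC T Unit, SatA M' I → ∃ N : MC (Fin 2) Unit, IsInst10 N ∧ Bisimilar M' N)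

/-!
Bisimulation preserves, for every set of labels, the probability of moving to a state carrying
one of them. So a chain bisimilar to the instance of `P` with parameter `x` leaves the label
class of each reachable state with probability exactly `x`, and a chain in which two reachable
states leave their classes with different probabilities is bisimilar to no instance.

Suppose an IMC over finitely many states had an implementation of every instance with
`x ∈ (0,1)`; at-every-step implementations can be replaced by once-and-for-all ones on the
states of the IMC, by pushing each transition row forward along the satisfaction relation,
which keeps the label-class probabilities. By pigeonhole two of them, for `a ≠ b`, have the
same transition support, hence the same reachable states. Taking the rows of the first at the
states labelled like the initial state and those of the second elsewhere gives again an
implementation, in which the initial state leaves its class with probability `a` and a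
reachable state of the other label with probability `b`.
-/

open MC Set

variable {S T A : Type}

theorem finsum_mem_finsum_mul_eq {X : Type} [Fintype S] [Fintype T] {V : T → X} {W : S → X}
    {q : T → ℝ} {δ : T → S → ℝ} (hδ : ∀ t u, 0 ≤ δ t u)
    (hδ_sum : ∀ t, q t ≠ 0 → ∑ᶠ u, δ t u = 1) (hδ_label : ∀ t u, 0 < δ t u → V t = W u)
    (L : Set X) :
    ∑ᶠ u ∈ {u | W u ∈ L}, ∑ᶠ t, q t * δ t u = ∑ᶠ t ∈ {t | V t ∈ L}, q t := by
  rw [finsum_mem_eq_toFinset_sum, finsum_mem_eq_toFinset_sum]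
  simp only [toFinset_ofPred, finsum_eq_sum_of_fintype]
  rw [Finset.sum_comm, Finset.sum_filter]
  refine Finset.sum_congr rfl fun t _ => ?_
  rw [← Finset.mul_sum]
  by_cases hq : q t = 0
  · simp [hq]
  have hδ_pos : ∀ u, δ t u ≠ 0 → V t = W u := fun u hu =>
    hδ_label t u ((hδ t u).lt_of_ne' hu)
  split_ifs with hL
  · rw [Finset.sum_filter_of_ne fun u _ hu => hδ_pos u hu ▸ hL, ← finsum_eq_sum_of_fintype,
      hδ_sum t hq, mul_one]
  · rw [Finset.sum_eq_zero fun u hu => ?_, mul_zero]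
    by_contra hδu
    exact hL ((hδ_pos u hδu).symm ▸ (Finset.mem_filter.1 hu).2)

theorem finsum_mem_sumP_inl [Fintype S] [Fintype T] (M : MC S A) (N : MC T A) (s : S)
    (C : Set (S ⊕ T)) : ∑ᶠ c ∈ C, sumP M N (.inl s) c = ∑ᶠ u ∈ Sum.inl ⁻¹' C, M.p s u := by
  rw [finsum_mem_def, finsum_mem_def, finsum_eq_sum_of_fintype, finsum_eq_sum_of_fintype,
    Fintype.sum_sum_type]
  simp [indicator, sumP]

theorem finsum_mem_sumP_inr [Fintype S] [Fintype T] (M : MC S A) (N : MC T A) (t : T)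
    (C : Set (S ⊕ T)) : ∑ᶠ c ∈ C, sumP M N (.inr t) c = ∑ᶠ u ∈ Sum.inr ⁻¹' C, N.p t u := by
  rw [finsum_mem_def, finsum_mem_def, finsum_eq_sum_of_fintype, finsum_eq_sum_of_fintype,
    Fintype.sum_sum_type]
  simp [indicator, sumP]

theorem Bisimilar.symm {M : MC S A} {N : MC T A} (h : Bisimilar M N) : Bisimilar N M := by
  obtain ⟨B, hB, h0, hstep⟩ := h
  have hsumP (a b : T ⊕ S) : sumP N M a b = sumP M N a.swap b.swap := by
    cases a <;> cases b <;> rfl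
  have hsumV (a : T ⊕ S) : sumV N M a = sumV M N a.swap := by cases a <;> rfl
  refine ⟨fun a b => B a.swap b.swap, ⟨fun a => hB.refl _, hB.symm, hB.trans⟩, hB.symm h0,
    fun a b hab => ⟨by rw [hsumV, hsumV]; exact (hstep _ _ hab).1, fun C hC => ?_⟩⟩
  have hinj : InjOn Sum.swap C := Sum.swap_leftInverse.injective.injOn
  have hclosed : ∀ x y, B x y → (x ∈ Sum.swap '' C ↔ y ∈ Sum.swap '' C) := by
    have hmem (z : S ⊕ T) : z ∈ Sum.swap '' C ↔ z.swap ∈ C :=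
      ⟨by rintro ⟨c, hc, rfl⟩; simpa using hc, fun hz => ⟨_, hz, Sum.swap_swap z⟩⟩
    intro x y hxy
    rw [hmem, hmem]
    exact hC _ _ (by simpa using hxy)
  have := (hstep _ _ hab).2 _ hclosed
  rw [finsum_mem_image hinj, finsum_mem_image hinj] at this
  simpa only [hsumP] using this

namespace MC

def SwitchesLabelWith (M : MC T A) (x : ℝ) : Prop :=
  ∀ t, Reaches M.p M.s0 t → ∑ᶠ u ∈ {u | M.V u ≠ M.V t}, M.p t u = x

end MC

theorem Bisimilar.exists_finsum_label_eq [Fintype S] [Fintype T] {M : MC S A} {N : MC T A}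
    (h : Bisimilar M N) {s : S} (hs : Reaches M.p M.s0 s) :
    ∃ t, M.V s = N.V t ∧ ∀ L : Set (Set A),
      ∑ᶠ u ∈ {u | M.V u ∈ L}, M.p s u = ∑ᶠ u ∈ {u | N.V u ∈ L}, N.p t u := by
  obtain ⟨B, hB, h0, hstep⟩ := h
  have hmass {s t} (hst : B (.inl s) (.inr t)) (C : Set (S ⊕ T))
      (hC : ∀ x y, B x y → (x ∈ C ↔ y ∈ C)) :
      ∑ᶠ u ∈ Sum.inl ⁻¹' C, M.p s u = ∑ᶠ u ∈ Sum.inr ⁻¹' C, N.p t u := by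
    rw [← finsum_mem_sumP_inl, ← finsum_mem_sumP_inr]
    exact (hstep _ _ hst).2 C hC
  have hrel : ∃ t, B (.inl s) (.inr t) := by
    induction hs with
    | refl => exact ⟨_, h0⟩
    | @tail b c _ hbc ih =>
      obtain ⟨t, ht⟩ := ih
      have hpos : 0 < ∑ᶠ u ∈ Sum.inl ⁻¹' {d | B (.inl c) d}, M.p b u :=
        finsum_cond_pos (fun u _ => M.nonneg b u) ⟨c, hB.refl _, hbc⟩ (toFinite _)
      rw [hmass ht {d | B (.inl c) d} fun x y hxy => ⟨fun hx => hB.trans hx hxy,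
        fun hy => hB.trans hy (hB.symm hxy)⟩] at hpos
      obtain ⟨t', ht', -⟩ := exists_ne_zero_of_finsum_mem_ne_zero hpos.ne'
      exact ⟨t', ht'⟩
  obtain ⟨t, ht⟩ := hrel
  exact ⟨t, (hstep _ _ ht).1, fun L =>
    hmass ht {d | sumV M N d ∈ L} fun x y hxy => by simp only [mem_ofPred, (hstep x y hxy).1]⟩

theorem Bisimilar.switchesLabelWith [Fintype S] [Fintype T] {M : MC S A} {N : MC T A}
    (h : Bisimilar M N) {x : ℝ} (hN : ∀ t, ∑ᶠ u ∈ {u | N.V u ≠ N.V t}, N.p t u = x) :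
    M.SwitchesLabelWith x := fun s hs => by
  obtain ⟨t, hst, hmass⟩ := h.exists_finsum_label_eq hs
  rw [← hN t, ← hst]
  exact hmass {L | L ≠ M.V s}

theorem finsum_mem_pP10_of_VP10_ne (x : ℝ) (j : Fin 2) :
    ∑ᶠ i ∈ {i | VP10 i ≠ VP10 j}, pP10 x j i = x := by
  have hset : {i | VP10 i ≠ VP10 j} = {1 - j} := by
    ext i; fin_cases i <;> fin_cases j <;> simp [VP10, empty_ne_univ]
  rw [hset, finsum_mem_singleton]
  fin_cases j <;> simp [pP10]

def pInst (x : ℝ) (hx₀ : 0 ≤ x) (hx₁ : x ≤ 1) : MC (Fin 2) Unit where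
  s0 := 1
  p := pP10 x
  nonneg s s' := by unfold pP10; split_ifs <;> linarith
  sum_one s := by rw [finsum_eq_sum_of_fintype, Fin.sum_univ_two]; fin_cases s <;> simp [pP10]
  V := VP10

theorem isInst10_pInst (x : ℝ) (hx₀ : 0 ≤ x) (hx₁ : x ≤ 1) : IsInst10 (pInst x hx₀ hx₁) :=
  ⟨rfl, rfl, x, rfl⟩

theorem reaches_pInst {x : ℝ} (hx₀ : 0 ≤ x) (hx₁ : x ≤ 1) (hx : 0 < x) (s : Fin 2) :
    Reaches (pInst x hx₀ hx₁).p (pInst x hx₀ hx₁).s0 s := by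
  fin_cases s
  · exact .single (by simpa [pInst, pP10] using hx)
  · exact .refl

theorem Bisimilar.switchesLabelWith_of_pInst [Fintype T] {x : ℝ} {hx₀ : 0 ≤ x} {hx₁ : x ≤ 1}
    {M : MC T Unit} (h : Bisimilar M (pInst x hx₀ hx₁)) : M.SwitchesLabelWith x :=
  h.switchesLabelWith (finsum_mem_pP10_of_VP10_ne x)

theorem Bisimilar.exists_switchesLabelWith [Fintype T] {M : MC T Unit} {N : MC (Fin 2) Unit}
    (h : Bisimilar M N) (hN : IsInst10 N) : ∃ x, M.SwitchesLabelWith x := by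
  obtain ⟨-, hV, x, hp⟩ := hN
  exact ⟨x, h.switchesLabelWith fun j => by rw [hV, hp]; exact finsum_mem_pP10_of_VP10_ne x j⟩

def mcM2 : MC (Fin 2) Unit where
  s0 := 1
  p := pM2
  nonneg s s' := by unfold pM2; split_ifs <;> norm_num
  sum_one s := by rw [finsum_eq_sum_of_fintype, Fin.sum_univ_two]; fin_cases s <;> norm_num [pM2]
  V := VP10

theorem not_isInst10_mcM2 : ¬ IsInst10 mcM2 := by
  rintro ⟨-, -, x, hp⟩
  have h₁₀ := congrFun₂ hp 1 0
  have h₀₁ := congrFun₂ hp 0 1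
  simp only [mcM2, pM2, pP10] at h₁₀ h₀₁
  norm_num at h₁₀ h₀₁
  linarith

theorem satO_mcM2 (I : IMC (Fin 2) Unit) (hs0 : I.s0 = 1) (hV : I.V = VP10)
    (hI : ∀ N, IsInst10 N → SatO N I) : SatO mcM2 I := by
  have hrow (x : ℝ) (hx₀ : 0 < x) (hx₁ : x ≤ 1) (s : Fin 2) (hs : pM2 s = pP10 x s) (s' : Fin 2) :
      pM2 s s' ∈ Icc (I.Plo s s') (I.Phi s s') :=
    hs ▸ (hI _ (isInst10_pInst x hx₀.le hx₁)).2.2 s (reaches_pInst _ hx₁ hx₀ s) s'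
  refine ⟨hs0.symm, hV.symm, fun s _ s' => ?_⟩
  fin_cases s
  · exact hrow (1 / 3) (by norm_num) (by norm_num) 0
      (by funext s'; fin_cases s' <;> norm_num [pM2, pP10]) s'
  · exact hrow (3 / 4) (by norm_num) (by norm_num) 1
      (by funext s'; fin_cases s' <;> norm_num [pM2, pP10]) s'

theorem SatO.satA {M : MC S A} {I : IMC S A} (h : SatO M I) : SatA M I := by
  obtain ⟨hs0, hV, hI⟩ := h
  refine ⟨fun t s => t = s ∧ Reaches M.p M.s0 t, ⟨hs0, .refl⟩, ?_⟩
  rintro t s ⟨rfl, ht⟩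
  refine ⟨by rw [hV], fun t' s' => if t' = s' ∧ Reaches M.p M.s0 t' then 1 else 0,
    fun t' s' => by positivity, fun t' ht' => ?_, fun s' => ?_, fun t' s' h => ?_⟩
  · rw [finsum_eq_single _ t' fun u hu => by simp [Ne.symm hu]]
    simp [show Reaches M.p M.s0 t' from ht.tail ht']
  · rw [finsum_eq_single _ s' fun u hu => by simp [hu]]
    by_cases hs' : Reaches M.p M.s0 s'
    · simpa [hs'] using hI t ht s'
    · have hzero : M.p t s' = 0 :=
        ((M.nonneg t s').eq_of_not_lt fun hpos => hs' (ht.tail hpos)).symm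
      simpa [hs', hzero] using hI t ht s'
  · by_contra hR
    simp [hR] at h

theorem IsSatRel.exists_row [Fintype S] [Fintype T] {M : MC T A} {I : IMC S A}
    {R : T → S → Prop} (hR : IsSatRel M I R) {x : ℝ} (hx : M.SwitchesLabelWith x) {t : T}
    {s : S} (ht : Reaches M.p M.s0 t) (hts : R t s) :
    ∃ r : S → ℝ, (∀ u, 0 ≤ r u) ∧ ∑ᶠ u, r u = 1 ∧ (∀ u, r u ∈ Icc (I.Plo s u) (I.Phi s u)) ∧
      (∀ u, 0 < r u → ∃ t', Reaches M.p M.s0 t' ∧ R t' u) ∧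
      ∑ᶠ u ∈ {u | I.V u ≠ I.V s}, r u = x := by
  obtain ⟨hV, δ, hδ, hδ_sum, hδ_mem, hδ_rel⟩ := hR.2 t s hts
  have hpush := finsum_mem_finsum_mul_eq (q := M.p t) hδ
    (fun t' ht' => hδ_sum t' ((M.nonneg t t').lt_of_ne' ht'))
    (fun t' u h => (hR.2 t' u (hδ_rel t' u h)).1)
  refine ⟨fun u => ∑ᶠ t', M.p t t' * δ t' u,
    fun u => finsum_nonneg fun t' => mul_nonneg (M.nonneg t t') (hδ t' u), ?_, hδ_mem, ?_, ?_⟩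
  · simpa [M.sum_one t] using hpush univ
  · intro u hu
    have hu' : ∑ᶠ t' ∈ univ, M.p t t' * δ t' u ≠ 0 := by rw [finsum_mem_univ]; exact hu.ne'
    obtain ⟨t', -, ht'⟩ := exists_ne_zero_of_finsum_mem_ne_zero hu'
    obtain ⟨hp, hδu⟩ := mul_ne_zero_iff.1 ht'
    exact ⟨t', ht.tail ((M.nonneg t t').lt_of_ne' hp), hδ_rel t' u ((hδ t' u).lt_of_ne' hδu)⟩
  · exact (hpush {L | L ≠ I.V s}).trans (by rw [← hV]; exact hx t ht)

theorem SatA.exists_satO_switchesLabelWith [Fintype S] [Fintype T] {M : MC T A} {I : IMC S A} {x : ℝ}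
    (hM : SatA M I) (hx : M.SwitchesLabelWith x) :
    ∃ W : MC S A, SatO W I ∧ W.SwitchesLabelWith x := by
  obtain ⟨R, hR⟩ := hM
  have hrow (s : S) : ∃ r : S → ℝ, (∀ u, 0 ≤ r u) ∧ ∑ᶠ u, r u = 1 ∧
      ((∃ t, Reaches M.p M.s0 t ∧ R t s) → (∀ u, r u ∈ Icc (I.Plo s u) (I.Phi s u)) ∧
        (∀ u, 0 < r u → ∃ t', Reaches M.p M.s0 t' ∧ R t' u) ∧
        ∑ᶠ u ∈ {u | I.V u ≠ I.V s}, r u = x) := by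
    by_cases hs : ∃ t, Reaches M.p M.s0 t ∧ R t s
    · obtain ⟨t, ht, hts⟩ := hs
      obtain ⟨r, hr₀, hr₁, hr⟩ := hR.exists_row hx ht hts
      exact ⟨r, hr₀, hr₁, fun _ => hr⟩
    · -- such states are unreachable in the chain built below, so any stochastic row will do
      refine ⟨fun u => if u = s then 1 else 0, fun u => by positivity, ?_, fun h => (hs h).elim⟩
      rw [finsum_eq_single _ s fun u hu => if_neg hu, if_pos rfl]
  choose r hr₀ hr₁ hr using hrow
  have hreach (s : S) (hs : Reaches r I.s0 s) : ∃ t, Reaches M.p M.s0 t ∧ R t s := by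
    induction hs with
    | refl => exact ⟨M.s0, .refl, hR.1⟩
    | tail _ hbc ih => exact (hr _ ih).2.1 _ hbc
  exact ⟨⟨I.s0, r, hr₀, hr₁, I.V⟩, ⟨rfl, rfl, fun s hs => (hr s (hreach s hs)).1⟩,
    fun s hs => (hr s (hreach s hs)).2.2⟩

namespace MC

def piecewise (M N : MC T A) (P : Set T) : MC T A where
  s0 := M.s0
  p := P.piecewise M.p N.p
  nonneg s := by by_cases hs : s ∈ P <;> simp [hs, M.nonneg, N.nonneg]
  sum_one s := by by_cases hs : s ∈ P <;> simp [hs, M.sum_one, N.sum_one]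
  V := M.V

@[simp]
theorem piecewise_p_of_mem {M N : MC T A} {P : Set T} {s : T} (hs : s ∈ P) :
    (M.piecewise N P).p s = M.p s :=
  P.piecewise_eq_of_mem _ _ hs

@[simp]
theorem piecewise_p_of_notMem {M N : MC T A} {P : Set T} {s : T} (hs : s ∉ P) :
    (M.piecewise N P).p s = N.p s :=
  P.piecewise_eq_of_notMem _ _ hs

theorem reaches_piecewise {M N : MC T A} (hMN : ∀ s u, 0 < M.p s u ↔ 0 < N.p s u) (P : Set T)
    {a b : T} (h : Reaches (M.piecewise N P).p a b) : Reaches M.p a b ∧ Reaches N.p a b := by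
  have hM : Reaches M.p a b := Relation.ReflTransGen.mono (fun s u hsu => by
    by_cases hs : s ∈ P
    · simpa [hs] using hsu
    · simpa [hs, hMN] using hsu) a b h
  exact ⟨hM, Relation.ReflTransGen.mono (fun s u => (hMN s u).1) a b hM⟩

end MC

theorem SatO.piecewise {M N : MC T A} {I : IMC T A} (hM : SatO M I) (hN : SatO N I)
    (hMN : ∀ s u, 0 < M.p s u ↔ 0 < N.p s u) (P : Set T) : SatO (M.piecewise N P) I := by
  refine ⟨hM.1, hM.2.1, fun s hs u => ?_⟩
  obtain ⟨hsM, hsN⟩ := reaches_piecewise hMN P hs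
  by_cases hsP : s ∈ P
  · simpa [hsP] using hM.2.2 s hsM u
  · simpa [hsP] using hN.2.2 s (by rwa [hN.1, ← hM.1]) u

theorem exists_satO_not_switchesLabelWith [Fintype T] (I : IMC T A)
    (hI : ∀ x ∈ Ioo (0 : ℝ) 1, ∃ W : MC T A, SatO W I ∧ W.SwitchesLabelWith x) :
    ∃ W : MC T A, SatO W I ∧ ∀ z, ¬ W.SwitchesLabelWith z := by
  choose W hWI hWx using fun x : Ioo (0 : ℝ) 1 => hI x x.2
  have : Infinite (Ioo (0 : ℝ) 1) := (Ioo_infinite zero_lt_one).to_subtype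
  obtain ⟨a, b, hab, hsupp⟩ :=
    Finite.exists_ne_map_eq_of_infinite fun x s u => 0 < (W x).p s u
  have hWab (s u : T) : 0 < (W a).p s u ↔ 0 < (W b).p s u := (congrFun₂ hsupp s u).to_iff
  set P : Set T := {s | I.V s = I.V I.s0}
  set Wm := (W a).piecewise (W b) P
  have hVa : (W a).V = I.V := (hWI a).2.1
  have hVb : (W b).V = I.V := (hWI b).2.1
  have hs0 : Wm.s0 ∈ P := by rw [show Wm.s0 = I.s0 from (hWI a).1]; rfl
  refine ⟨Wm, (hWI a).piecewise (hWI b) hWab P, fun z hz => hab (Subtype.ext ?_)⟩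
  have hza : z = a := by
    rw [← hz _ .refl, ← hWx a _ .refl, MC.piecewise_p_of_mem hs0]
    rfl
  obtain ⟨c, hc, hpc⟩ := exists_ne_zero_of_finsum_mem_ne_zero
    ((hWx a _ .refl).trans_ne a.2.1.ne')
  have hcP : c ∉ P := fun h => hc (by rw [hVa, h, ← hWI a |>.1])
  have hc_reach : Reaches Wm.p Wm.s0 c :=
    .single (by rw [MC.piecewise_p_of_mem hs0]; exact (W a).nonneg _ c |>.lt_of_ne' hpc)
  have hzb : z = b := by
    have hs0b : Wm.s0 = (W b).s0 := (hWI a).1.trans (hWI b).1.symm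
    rw [← hz _ hc_reach, ← hWx b c (hs0b ▸ (reaches_piecewise hWab P hc_reach).2)]
    rw [MC.piecewise_p_of_notMem hcP]
    simp only [Wm, MC.piecewise, hVa, hVb]
  rw [← hza, ← hzb]

/-- the instance with `x = 3/4` satisfies `P`; the MC `M₂` does not
satisfy `P` yet satisfies every IMC (over the same states) whose intervals contain all
instances of `P`; hence no IMC is equivalent to `P` under either semantics. -/
theorem stmt10 :
    (∃ N : MC (Fin 2) Unit, IsInst10 N ∧ N.p = pP10 (3 / 4)) ∧
    (∃ M₂ : MC (Fin 2) Unit, M₂.s0 = 1 ∧ M₂.V = VP10 ∧ M₂.p = pM2 ∧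
      ¬ IsInst10 M₂ ∧
      ∀ I : IMC (Fin 2) Unit, I.s0 = 1 → I.V = VP10 →
        (∀ N, IsInst10 N → SatO N I) → SatO M₂ I) ∧
    (∀ (T : Type) (_ : Finite T) (I : IMC T Unit), ¬ EquivO10 I ∧ ¬ EquivA10 I) := by
  refine ⟨⟨_, isInst10_pInst (3 / 4) (by norm_num) (by norm_num), rfl⟩,
    ⟨mcM2, rfl, rfl, rfl, not_isInst10_mcM2, satO_mcM2⟩, fun T _ I => ?_⟩
  have := Fintype.ofFinite T
  constructor
  · rintro ⟨hfwd, hbwd⟩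
    obtain ⟨W, hW, hWz⟩ := exists_satO_not_switchesLabelWith I fun x hx => by
      obtain ⟨M, hM, hbis⟩ := hfwd _ (isInst10_pInst x hx.1.le hx.2.le)
      exact ⟨M, hM, hbis.symm.switchesLabelWith_of_pInst⟩
    obtain ⟨N, hN, hbis⟩ := hbwd W hW
    obtain ⟨z, hz⟩ := hbis.exists_switchesLabelWith hN
    exact hWz z hz
  · rintro ⟨hfwd, hbwd⟩
    obtain ⟨W, hW, hWz⟩ := exists_satO_not_switchesLabelWith I fun x hx => by
      obtain ⟨M, hM, hbis⟩ := hfwd _ (isInst10_pInst x hx.1.le hx.2.le)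
      exact hM.exists_satO_switchesLabelWith hbis.symm.switchesLabelWith_of_pInst
    obtain ⟨N, hN, hbis⟩ := hbwd W hW.satA
    obtain ⟨z, hz⟩ := hbis.exists_switchesLabelWith hN
    exact hWz z hz
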